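/- (Symmetrizability) Under the non-resonance condition (u − u₁)² ≠ c₁² and (u − u₂)² ≠ c₂², there exists a symmetric positive definite matrix P ∈ Matrix (Fin 7) (Fin 7) ℝ such that P·M is symmetric, where M is the quasilinear coefficient matrix of the two-fluid model. -/

import Mathlib

/-!
Order the variables as `(α₁, u₁, p₁, s₁, u₂, p₂, s₂)`. Then `M = [[u, 0], [z, N]]` is block lower
triangular with `N = diag(M₁, M₂)`, and `N` is symmetrized by
`S = diag(ρ₁²c₁², 1, 1, ρ₂²c₂², 1, 1)`.
For `P = [[β, qᵀ], [q, S]]` the product `P M` is symmetric as soon as `(Nᵀ - u) q = S z`; this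
splits into one `2 × 2` system per phase, with determinant `(u_k - u)² - c_k²`, which the
non-resonance condition makes invertible (the entropy rows are trivial because `z` vanishes
there). Taking `β = 1 + qᵀ S⁻¹ q` makes the Schur complement of `S` in `P` equal to `1`, so `P` is
positive definite.
-/

open Matrix

theorem exists_add_mul_eq_of_det_ne_zero {K : Type*} [Field K] {a b c d : K}
    (h : a * d - b * c ≠ 0) (r s : K) : ∃ x y, a * x + b * y = r ∧ c * x + d * y = s :=
  ⟨(r * d - b * s) / (a * d - b * c), (a * s - r * c) / (a * d - b * c),
    by rw [← mul_div_assoc, ← mul_div_assoc, ← add_div, div_eq_iff h]; ring,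
    by rw [← mul_div_assoc, ← mul_div_assoc, ← add_div, div_eq_iff h]; ring⟩

section Bordered

variable {ι n : Type*} [Fintype ι] [Fintype n]

theorem posDef_fromBlocks_one_add {𝕜 : Type*} [Field 𝕜] [PartialOrder 𝕜] [StarRing 𝕜]
    [StarOrderedRing 𝕜] [DecidableEq ι] [DecidableEq n]
    {B : Matrix ι n 𝕜} {D : Matrix n n 𝕜} (hD : D.PosDef) :
    (fromBlocks (1 + B * D⁻¹ * Bᴴ) B Bᴴ D).PosDef := by
  have : Invertible D := hD.isUnit.invertible
  refine posDef_iff_dotProduct_mulVec.2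
    ⟨.fromBlocks (isHermitian_one.add (isHermitian_mul_mul_conjTranspose B hD.1.inv)) rfl hD.1,
      fun x hx => ?_⟩
  rw [← Sum.elim_comp_inl_inr x, dotProduct_mulVec, schur_complement_eq₂₂ _ _ _ _ hD.1,
    add_sub_cancel_right, ← dotProduct_mulVec, ← dotProduct_mulVec, one_mulVec]
  by_cases h : x ∘ Sum.inl = 0
  · have hr : x ∘ Sum.inr ≠ 0 := fun hr =>
      hx (by rw [← Sum.elim_comp_inl_inr x, h, hr]; ext i; cases i <;> rfl)
    simpa [h] using hD.dotProduct_mulVec_pos hr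
  · exact add_pos_of_nonneg_of_pos (hD.posSemidef.dotProduct_mulVec_nonneg _)
      (PosDef.one.dotProduct_mulVec_pos h |>.trans_eq (by rw [one_mulVec]))

theorem isSymm_fromBlocks_mul_fromBlocks {R : Type*} [CommRing R] [Subsingleton ι]
    {β A : Matrix ι ι R} {q z : Matrix n ι R} {S N : Matrix n n R}
    (hSN : (S * N).IsSymm) (hq : Nᵀ * q = q * A + S * z) :
    (fromBlocks β qᵀ q S * fromBlocks A 0 z N).IsSymm := by
  rw [fromBlocks_multiply, Matrix.mul_zero, Matrix.mul_zero, zero_add, zero_add]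
  refine .fromBlocks (by ext i j; rw [Subsingleton.elim i j]; rfl) ?_ hSN
  rw [transpose_mul, transpose_transpose, hq]

end Bordered

/-- `diag(M₁, M₂)`, acting on `(u₁, p₁, s₁, u₂, p₂, s₂)`. -/
noncomputable def acousticMatrix (ρ₁ c₁ u₁ ρ₂ c₂ u₂ : ℝ) : Matrix (Fin 6) (Fin 6) ℝ :=
  !![u₁, 1 / ρ₁, 0, 0, 0, 0;
     ρ₁ * c₁ ^ 2, u₁, 0, 0, 0, 0;
     0, 0, u₁, 0, 0, 0;
     0, 0, 0, u₂, 1 / ρ₂, 0;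
     0, 0, 0, ρ₂ * c₂ ^ 2, u₂, 0;
     0, 0, 0, 0, 0, u₂]

noncomputable def acousticSymmetrizer (ρ₁ c₁ ρ₂ c₂ : ℝ) : Matrix (Fin 6) (Fin 6) ℝ :=
  diagonal ![ρ₁ ^ 2 * c₁ ^ 2, 1, 1, ρ₂ ^ 2 * c₂ ^ 2, 1, 1]

theorem exists_phase_solution {ρ c v u : ℝ} (hρ : ρ ≠ 0) (hres : (u - v) ^ 2 ≠ c ^ 2) (a b : ℝ) :
    ∃ x y, (v - u) * x + ρ * c ^ 2 * y = ρ ^ 2 * c ^ 2 * a ∧ 1 / ρ * x + (v - u) * y = b := by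
  refine exists_add_mul_eq_of_det_ne_zero ?_ _ _
  field_simp
  exact fun h => hres (by linear_combination h)

section Acoustic

variable {ρ₁ c₁ u₁ ρ₂ c₂ u₂ : ℝ}

theorem acousticSymmetrizer_posDef (hρ₁ : ρ₁ ≠ 0) (hc₁ : c₁ ≠ 0) (hρ₂ : ρ₂ ≠ 0) (hc₂ : c₂ ≠ 0) :
    (acousticSymmetrizer ρ₁ c₁ ρ₂ c₂).PosDef := by
  refine posDef_diagonal_iff.2 fun i => ?_
  fin_cases i <;> simp <;> positivity

theorem isSymm_acousticSymmetrizer_mul (hρ₁ : ρ₁ ≠ 0) (hρ₂ : ρ₂ ≠ 0) :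
    (acousticSymmetrizer ρ₁ c₁ ρ₂ c₂ * acousticMatrix ρ₁ c₁ u₁ ρ₂ c₂ u₂).IsSymm := by
  ext i j
  fin_cases i <;> fin_cases j <;> simp [acousticSymmetrizer, acousticMatrix] <;> field_simp

theorem exists_acoustic_border (u : ℝ) (hρ₁ : ρ₁ ≠ 0) (hρ₂ : ρ₂ ≠ 0)
    (hres₁ : (u - u₁) ^ 2 ≠ c₁ ^ 2) (hres₂ : (u - u₂) ^ 2 ≠ c₂ ^ 2) (a₁ b₁ a₂ b₂ : ℝ) :
    ∃ q : Matrix (Fin 6) (Fin 1) ℝ, (acousticMatrix ρ₁ c₁ u₁ ρ₂ c₂ u₂)ᵀ * q =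
      q * !![u] + acousticSymmetrizer ρ₁ c₁ ρ₂ c₂ * !![a₁; b₁; 0; a₂; b₂; 0] := by
  obtain ⟨x₁, y₁, hx₁, hy₁⟩ := exists_phase_solution hρ₁ hres₁ a₁ b₁
  obtain ⟨x₂, y₂, hx₂, hy₂⟩ := exists_phase_solution hρ₂ hres₂ a₂ b₂
  refine ⟨!![x₁; y₁; 0; x₂; y₂; 0], ?_⟩
  ext i j
  fin_cases i <;> fin_cases j <;>
    simp [acousticSymmetrizer, acousticMatrix, mul_apply, Fin.sum_univ_succ]
  all_goals first
    | linear_combination hx₁ | linear_combination hy₁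
    | linear_combination hx₂ | linear_combination hy₂

end Acoustic

theorem two_fluid_model_symmetrizable_general
    (α₁ ρ₁ ρ₂ c₁ c₂ u₁ u₂ p₁ p₂ : ℝ)
    (hρ₁ : 0 < ρ₁) (hρ₂ : 0 < ρ₂) (hc₁ : 0 < c₁) (hc₂ : 0 < c₂)
    (α₂ ρ u : ℝ)
    (hres₁ : (u - u₁) ^ 2 ≠ c₁ ^ 2) (hres₂ : (u - u₂) ^ 2 ≠ c₂ ^ 2)
    (M : Matrix (Fin 7) (Fin 7) ℝ)
    (hM : M = !![u, 0, 0, 0, 0, 0, 0;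
                 (p₁ - p₂) / ρ, u₁, 1 / ρ₁, 0, 0, 0, 0;
                 -(ρ₁ * c₁ ^ 2 / α₁) * (u - u₁), ρ₁ * c₁ ^ 2, u₁, 0, 0, 0, 0;
                 0, 0, 0, u₁, 0, 0, 0;
                 (p₁ - p₂) / ρ, 0, 0, 0, u₂, 1 / ρ₂, 0;
                 (ρ₂ * c₂ ^ 2 / α₂) * (u - u₂), 0, 0, 0, ρ₂ * c₂ ^ 2, u₂, 0;
                 0, 0, 0, 0, 0, 0, u₂]) :
    ∃ P : Matrix (Fin 7) (Fin 7) ℝ, P.PosDef ∧ (P * M).IsSymm := by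
  set z : Matrix (Fin 6) (Fin 1) ℝ := !![(p₁ - p₂) / ρ; -(ρ₁ * c₁ ^ 2 / α₁) * (u - u₁); 0;
    (p₁ - p₂) / ρ; (ρ₂ * c₂ ^ 2 / α₂) * (u - u₂); 0]
  set e : Fin 7 ≃ Fin 1 ⊕ Fin 6 := (finSumFinEquiv (m := 1) (n := 6)).symm
  have hM_blocks :
      M = (fromBlocks !![u] 0 z (acousticMatrix ρ₁ c₁ u₁ ρ₂ c₂ u₂)).submatrix e e := by
    subst hM
    ext i j
    fin_cases i <;> fin_cases j <;> rfl
  obtain ⟨q, hq⟩ := exists_acoustic_border u hρ₁.ne' hρ₂.ne' hres₁ hres₂ _ _ _ _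
  have hP := posDef_fromBlocks_one_add (B := qᵀ)
    (acousticSymmetrizer_posDef hρ₁.ne' hc₁.ne' hρ₂.ne' hc₂.ne')
  rw [conjTranspose_eq_transpose_of_trivial, transpose_transpose] at hP
  refine ⟨_, hP.submatrix e.injective, ?_⟩
  rw [hM_blocks, submatrix_mul_equiv]
  exact (isSymm_fromBlocks_mul_fromBlocks
    (isSymm_acousticSymmetrizer_mul hρ₁.ne' hρ₂.ne') hq).submatrix e

/-- (Symmetrizability) Under the non-resonance condition, there exists a symmetric
positive definite matrix `P` such that `P * M` is symmetric, where `M` is the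
quasilinear coefficient matrix of the two-fluid model. -/
theorem two_fluid_model_symmetrizable
    (α₁ ρ₁ ρ₂ c₁ c₂ u₁ u₂ p₁ p₂ : ℝ)
    (hα₁ : 0 < α₁) (hα₁' : α₁ < 1)
    (hρ₁ : 0 < ρ₁) (hρ₂ : 0 < ρ₂) (hc₁ : 0 < c₁) (hc₂ : 0 < c₂)
    (α₂ m₁ m₂ ρ Y₁ Y₂ u : ℝ)
    (hα₂ : α₂ = 1 - α₁) (hm₁ : m₁ = α₁ * ρ₁) (hm₂ : m₂ = α₂ * ρ₂)
    (hρ : ρ = m₁ + m₂) (hY₁ : Y₁ = m₁ / ρ) (hY₂ : Y₂ = m₂ / ρ)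
    (hu : u = Y₁ * u₁ + Y₂ * u₂)
    (hres₁ : (u - u₁) ^ 2 ≠ c₁ ^ 2) (hres₂ : (u - u₂) ^ 2 ≠ c₂ ^ 2)
    (M : Matrix (Fin 7) (Fin 7) ℝ)
    (hM : M = !![u, 0, 0, 0, 0, 0, 0;
                 (p₁ - p₂) / ρ, u₁, 1 / ρ₁, 0, 0, 0, 0;
                 -(ρ₁ * c₁ ^ 2 / α₁) * (u - u₁), ρ₁ * c₁ ^ 2, u₁, 0, 0, 0, 0;
                 0, 0, 0, u₁, 0, 0, 0;
                 (p₁ - p₂) / ρ, 0, 0, 0, u₂, 1 / ρ₂, 0;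
                 (ρ₂ * c₂ ^ 2 / α₂) * (u - u₂), 0, 0, 0, ρ₂ * c₂ ^ 2, u₂, 0;
                 0, 0, 0, 0, 0, 0, u₂]) :
    ∃ P : Matrix (Fin 7) (Fin 7) ℝ, P.PosDef ∧ (P * M).IsSymm :=
  two_fluid_model_symmetrizable_general α₁ ρ₁ ρ₂ c₁ c₂ u₁ u₂ p₁ p₂ hρ₁ hρ₂ hc₁ hc₂ α₂ ρ u hres₁
    hres₂ M hM
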